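/- arXiv:2310.11855 — 12 statements merged into one kernel-verified Lean document; each statement's English description precedes it below -/
import Mathlib

section
/- Let (X, r) be a near-rack solution with r(x,y) = (σ_x(y), τ(x)). If r(x, τ(x)) = (x, τ(x)) for some x ∈ X, then r(τ(x), x) = (τ(x), x). -/
def rFst {X : Type*} (r : X × X → X × X) : X × X × X → X × X × X :=
  fun p => ((r (p.1, p.2.1)).1, (r (p.1, p.2.1)).2, p.2.2)

def rSnd {X : Type*} (r : X × X → X × X) : X × X × X → X × X × X :=
  fun p => (p.1, r (p.2.1, p.2.2))

def IsYB {X : Type*} (r : X × X → X × X) : Prop :=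
  rFst r ∘ rSnd r ∘ rFst r = rSnd r ∘ rFst r ∘ rSnd r

/-- `(X, r)` is a near-rack solution of the Yang–Baxter equation with data `σ, τ`:
a non-degenerate set-theoretic solution of the form `r (x, y) = (σ x y, τ x)`
with `τ ≠ id` and `τ² = id`. -/
structure IsNearRackSolution {X : Type*} (r : X × X → X × X)
    (σ : X → X → X) (τ : X → X) : Prop where
  hr : ∀ x y : X, r (x, y) = (σ x y, τ x)
  hYB : IsYB r
  hrbij : Function.Bijective r
  hσbij : ∀ x : X, Function.Bijective (σ x)
  hτbij : Function.Bijective τ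
  hτ2 : τ ∘ τ = id
  hτne : τ ≠ id

theorem IsYB.tau_sigma_eq_sigma_tau {X : Type*} {r : X × X → X × X} {σ : X → X → X} {τ : X → X}
    (hr : ∀ x y : X, r (x, y) = (σ x y, τ x)) (hYB : IsYB r) (x y : X) :
    τ (σ x y) = σ (τ x) (τ y) := by
  simpa [rFst, rSnd, hr] using congrArg (fun p => p.2.1) (congrFun hYB (x, y, y))

theorem stmt3 {X : Type*} (r : X × X → X × X) (σ : X → X → X) (τ : X → X)
    (h : IsNearRackSolution r σ τ) (x : X)
    (hx : r (x, τ x) = (x, τ x)) :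
    r (τ x, x) = (τ x, x) := by
  have hττ : τ (τ x) = x := congrFun h.hτ2 x
  have hσ : σ x (τ x) = x := by simpa [h.hr] using hx
  have hστ : σ (τ x) x = τ x := by
    simpa [hσ, hττ] using (h.hYB.tau_sigma_eq_sigma_tau h.hr x (τ x)).symm
  rw [h.hr, hστ, hττ]
end

section
/- Let (X, r) be a near-rack solution with r(x,y) = (σ_x(y), τ(x)), and suppose the assignment x ↦ σ_x is injective (i.e. σ_x = σ_y implies x = y). Then σ_x(τ(x)) = x for every x ∈ X, and consequently the set of fixed points {(x,y) ∈ X × X : r(x,y) = (x,y)} has exactly |X| elements when X is finite. -/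
/-!
Reading off the first component of the braid relation gives
`σ (σ x y) ∘ σ (τ x) = σ x ∘ σ y`; taking `y = τ x` and cancelling the bijection `σ (τ x)` yields
`σ (σ x (τ x)) = σ x`, so injectivity of `x ↦ σ x` forces `σ x (τ x) = x`. Then `r (x, y) = (x, y)`
holds exactly when `y = τ x`, and the fixed points are the graph of `τ`.
-/

section

variable {X : Type*} {r : X × X → X × X} {σ : X → X → X} {τ : X → X}

theorem IsYB.sigma_sigma (hr : ∀ x y, r (x, y) = (σ x y, τ x)) (hYB : IsYB r) (x y z : X) :
    σ (σ x y) (σ (τ x) z) = σ x (σ y z) := by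
  have := congrArg Prod.fst (congrFun hYB (x, y, z))
  simpa only [Function.comp_apply, rFst, rSnd, hr] using this

theorem IsNearRackSolution.sigma_sigma_tau (h : IsNearRackSolution r σ τ) (x : X) :
    σ (σ x (τ x)) = σ x := by
  funext z
  obtain ⟨w, rfl⟩ := (h.hσbij (τ x)).surjective z
  exact h.hYB.sigma_sigma h.hr x (τ x) w

theorem IsNearRackSolution.sigma_tau_self (h : IsNearRackSolution r σ τ)
    (hinj : Function.Injective σ) (x : X) : σ x (τ x) = x :=
  hinj (h.sigma_sigma_tau x)

theorem apply_mk_eq_self_iff_of_sigma_tau_self (hr : ∀ x y, r (x, y) = (σ x y, τ x))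
    (hfix : ∀ x, σ x (τ x) = x) (x y : X) : r (x, y) = (x, y) ↔ y = τ x := by
  rw [hr, Prod.mk.injEq]
  constructor
  · exact fun ⟨_, hy⟩ => hy.symm
  · rintro rfl
    exact ⟨hfix x, rfl⟩

def fixedPointsEquivOfSigmaTauSelf (hr : ∀ x y, r (x, y) = (σ x y, τ x))
    (hfix : ∀ x, σ x (τ x) = x) : {p : X × X // r p = p} ≃ X where
  toFun p := p.1.1
  invFun x := ⟨(x, τ x), (apply_mk_eq_self_iff_of_sigma_tau_self hr hfix x _).2 rfl⟩
  left_inv := by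
    rintro ⟨⟨x, y⟩, hp⟩
    obtain rfl : y = τ x := (apply_mk_eq_self_iff_of_sigma_tau_self hr hfix x y).1 hp
    rfl
  right_inv _ := rfl

end

theorem stmt5_general {X : Type*} (r : X × X → X × X) (σ : X → X → X) (τ : X → X)
    (h : IsNearRackSolution r σ τ)
    (hinj : Function.Injective σ) :
    (∀ x : X, σ x (τ x) = x) ∧
      Nat.card {p : X × X // r p = p} = Nat.card X :=
  have hfix := h.sigma_tau_self hinj
  ⟨hfix, Nat.card_congr (fixedPointsEquivOfSigmaTauSelf h.hr hfix)⟩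

theorem stmt5 {X : Type*} [Finite X] (r : X × X → X × X) (σ : X → X → X) (τ : X → X)
    (h : IsNearRackSolution r σ τ)
    (hinj : Function.Injective σ) :
    (∀ x : X, σ x (τ x) = x) ∧
      Nat.card {p : X × X // r p = p} = Nat.card X :=
  stmt5_general r σ τ h hinj
end

section
/- Let (X, ▷) be a rack and τ : X → X a map with τ² = id, τ ≠ id, and τ(τ(x) ▷ y) = x ▷ τ(y) for all x, y ∈ X. Define r̃(x,y) = (x ▷ y, x) and r = (τ×id) ∘ r̃ ∘ (τ×id). Then r is a set-theoretic solution of the Yang–Baxter equation, r(x,y) = (x ▷ τ(y), τ(x)) = ((id×τ) ∘ r̃ ∘ (id×τ))(x,y), and r is of the form r(x,y) = (σ_x(y), τ(x)) with σ_x bijective for every x (so (X, r) is a near-rack solution). -/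
/-- A rack structure: each left translation is bijective and the operation
is left self-distributive. -/
def IsRack {X : Type*} (op : X → X → X) : Prop :=
  (∀ x : X, Function.Bijective (op x)) ∧
    ∀ x y z : X, op x (op y z) = op (op x y) (op x z)

section TwistedDerived

variable {X : Type*} {op : X → X → X} {τ : X → X}

def twistedDerived (op : X → X → X) (τ : X → X) : X × X → X × X :=
  fun p => (op p.1 (τ p.2), τ p.1)

theorem conj_fst_derived_eq_twistedDerived
    (hcompat : ∀ x y : X, τ (op (τ x) y) = op x (τ y)) :
    Prod.map τ id ∘ (fun p : X × X => (op p.1 p.2, p.1)) ∘ Prod.map τ id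
      = twistedDerived op τ :=
  funext fun p => Prod.ext (hcompat p.1 p.2) rfl

theorem conj_snd_derived_eq_twistedDerived :
    Prod.map id τ ∘ (fun p : X × X => (op p.1 p.2, p.1)) ∘ Prod.map id τ
      = twistedDerived op τ :=
  rfl

theorem compat_symm (hτ : Function.Involutive τ)
    (hcompat : ∀ x y : X, τ (op (τ x) y) = op x (τ y)) (x y : X) :
    τ (op x (τ y)) = op (τ x) y := by
  simpa only [hτ x, hτ y] using hcompat (τ x) (τ y)

theorem isYB_twistedDerived (hdist : ∀ x y z : X, op x (op y z) = op (op x y) (op x z))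
    (hτ : Function.Involutive τ) (hcompat : ∀ x y : X, τ (op (τ x) y) = op x (τ y)) :
    IsYB (twistedDerived op τ) := by
  funext ⟨x, y, z⟩
  simp only [rFst, rSnd, twistedDerived, Function.comp_apply, Prod.mk.injEq]
  -- both first components equal `(x ▷ τ y) ▷ (x ▷ z)`
  refine ⟨?_, by rw [hτ y, compat_symm hτ hcompat], trivial⟩
  rw [hcompat, hτ, compat_symm hτ hcompat]
  exact (hdist x (τ y) z).symm

theorem bijective_twistedDerived_fst (hbij : ∀ x : X, Function.Bijective (op x))
    (hτ : Function.Involutive τ) (x : X) :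
    Function.Bijective fun y => op x (τ y) :=
  (hbij x).comp hτ.bijective

end TwistedDerived

theorem stmt6_general {X : Type*} (op : X → X → X) (τ : X → X)
    (hrack : IsRack op) (hτ2 : τ ∘ τ = id)
    (hcompat : ∀ x y : X, τ (op (τ x) y) = op x (τ y)) :
    IsYB (Prod.map τ id ∘ (fun p : X × X => (op p.1 p.2, p.1)) ∘ Prod.map τ id) ∧
    (∀ x y : X,
      (Prod.map τ id ∘ (fun p : X × X => (op p.1 p.2, p.1)) ∘ Prod.map τ id) (x, y)
        = (op x (τ y), τ x) ∧
      (Prod.map τ id ∘ (fun p : X × X => (op p.1 p.2, p.1)) ∘ Prod.map τ id) (x, y)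
        = (Prod.map id τ ∘ (fun p : X × X => (op p.1 p.2, p.1)) ∘ Prod.map id τ) (x, y)) ∧
    (∀ x : X, Function.Bijective (fun y => op x (τ y))) := by
  obtain ⟨hbij, hdist⟩ := hrack
  have hτ : Function.Involutive τ := congrFun hτ2
  rw [conj_fst_derived_eq_twistedDerived hcompat, conj_snd_derived_eq_twistedDerived]
  exact ⟨isYB_twistedDerived hdist hτ hcompat, fun _ _ => ⟨rfl, rfl⟩,
    bijective_twistedDerived_fst hbij hτ⟩

theorem stmt6 {X : Type*} (op : X → X → X) (τ : X → X)
    (hrack : IsRack op) (hτ2 : τ ∘ τ = id) (hτne : τ ≠ id)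
    (hcompat : ∀ x y : X, τ (op (τ x) y) = op x (τ y)) :
    IsYB (Prod.map τ id ∘ (fun p : X × X => (op p.1 p.2, p.1)) ∘ Prod.map τ id) ∧
    (∀ x y : X,
      (Prod.map τ id ∘ (fun p : X × X => (op p.1 p.2, p.1)) ∘ Prod.map τ id) (x, y)
        = (op x (τ y), τ x) ∧
      (Prod.map τ id ∘ (fun p : X × X => (op p.1 p.2, p.1)) ∘ Prod.map τ id) (x, y)
        = (Prod.map id τ ∘ (fun p : X × X => (op p.1 p.2, p.1)) ∘ Prod.map id τ) (x, y)) ∧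
    (∀ x : X, Function.Bijective (fun y => op x (τ y))) :=
  stmt6_general op τ hrack hτ2 hcompat
end

section
/- Let (X, r) be a non-degenerate set-theoretic solution of the Yang–Baxter equation with r(x,y) = (σ_x(y), τ_y(x)). Then the operation x ▷ y := τ_x(σ_{τ_y⁻¹(x)}(y)) makes (X, ▷) a rack. -/
/-!
Whenever `r (a, y) = (b, x)`, i.e. `τ_y a = x`, one has `x ▷ y = τ_x b`. Hence `x ▷ -` is `τ_x`
composed with `y ↦ σ_{τ_y⁻¹ x} y`, whose inverse is `b ↦ (r⁻¹ (b, x)).2`. For self-distributivity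
write `y = τ_z c` and `x = τ_z τ_c d`: the three components of the braid relation on triples rewrite
`x ▷ (y ▷ z)` and `(x ▷ y) ▷ (x ▷ z)` into the two sides of the `ττ`-component evaluated at
`(σ_d σ_c z, σ_e y, x)` with `e = τ_{σ_c z} d`.
-/

open Function

theorem IsYB.components {X : Type*} {r : X × X → X × X} {σ τ : X → X → X}
    (hr : ∀ x y : X, r (x, y) = (σ x y, τ y x)) (hYB : IsYB r) (x y z : X) :
    σ (σ x y) (σ (τ y x) z) = σ x (σ y z) ∧
      τ (σ (τ y x) z) (σ x y) = σ (τ (σ y z) x) (τ z y) ∧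
      τ z (τ y x) = τ (τ z y) (τ (σ y z) x) := by
  have h := congrFun hYB (x, y, z)
  simp only [comp_apply, rFst, rSnd, hr, Prod.mk.injEq] at h
  exact h

section DerivedRack

variable {X : Type*} [Nonempty X] {σ τ : X → X → X}

noncomputable def derivedRackOp (σ τ : X → X → X) (x y : X) : X :=
  τ x (σ (invFun (τ y) x) y)

theorem derivedRackOp_eq {a x y : X} (hτ : Injective (τ y)) (h : τ y a = x) :
    derivedRackOp σ τ x y = τ x (σ a y) := by
  rw [derivedRackOp, ← h, leftInverse_invFun hτ a]

theorem bijective_derivedRackOp {r : X × X → X × X}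
    (hr : ∀ x y : X, r (x, y) = (σ x y, τ y x)) (hrbij : Bijective r)
    (hτ : ∀ y : X, Bijective (τ y)) (x : X) : Bijective (derivedRackOp σ τ x) := by
  let φ : X → X := fun y => σ (invFun (τ y) x) y
  let ρ := surjInv hrbij.2
  let ψ : X → X := fun w => (ρ (w, x)).2
  have hr_φ (y : X) : r (invFun (τ y) x, y) = (φ y, x) := by
    rw [hr, rightInverse_invFun (hτ y).2]
  have hψφ : LeftInverse ψ φ := fun y => by
    simp only [ψ, ρ, ← hr_φ, leftInverse_surjInv hrbij _]
  have hφψ : RightInverse ψ φ := fun w => by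
    suffices ∀ a y : X, r (a, y) = (w, x) → φ y = w from
      this _ _ (surjInv_eq hrbij.2 (w, x))
    intro a y h
    rw [hr, Prod.mk.injEq] at h
    obtain ⟨rfl, rfl⟩ := h
    simp only [φ, leftInverse_invFun (hτ y).1 a]
  exact (hτ x).comp (bijective_iff_has_inverse.2 ⟨ψ, hψφ, hφψ⟩)

theorem derivedRackOp_self_distrib (hτ : ∀ y : X, Bijective (τ y))
    (hσσ : ∀ x y z : X, σ (σ x y) (σ (τ y x) z) = σ x (σ y z))
    (hτσ : ∀ x y z : X, τ (σ (τ y x) z) (σ x y) = σ (τ (σ y z) x) (τ z y))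
    (hττ : ∀ x y z : X, τ z (τ y x) = τ (τ z y) (τ (σ y z) x)) (x y z : X) :
    derivedRackOp σ τ x (derivedRackOp σ τ y z) =
      derivedRackOp σ τ (derivedRackOp σ τ x y) (derivedRackOp σ τ x z) := by
  have hinj (y : X) := (hτ y).1
  obtain ⟨c, rfl⟩ := (hτ z).2 y
  obtain ⟨d, rfl⟩ : ∃ d, τ z (τ c d) = x := ((hτ z).2.comp (hτ c).2) x
  set y := τ z c
  set x := τ z (τ c d)
  set e := τ (σ c z) d
  set w := σ d (σ c z)
  have hx : τ y e = x := (hττ d c z).symm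
  have hyz : derivedRackOp σ τ y z = τ y (σ c z) := derivedRackOp_eq (hinj z) rfl
  have hxy : derivedRackOp σ τ x y = τ x (σ e y) := derivedRackOp_eq (hinj y) hx
  have hxz : derivedRackOp σ τ x z = τ x (σ (τ c d) z) := derivedRackOp_eq (hinj z) rfl
  have hx_yz : derivedRackOp σ τ x (τ y (σ c z)) = τ x (τ (σ e y) w) := by
    rw [derivedRackOp_eq (hinj _) ((hττ d (σ c z) y).symm.trans hx), ← hτσ d (σ c z) y]
  have hxy_xz : derivedRackOp σ τ (τ x (σ e y)) (τ x (σ (τ c d) z)) =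
      τ (τ x (σ e y)) (τ (σ (σ e y) x) w) := by
    have hσ_dc : τ (σ (τ c d) z) (σ d c) = σ e y := hτσ d c z
    rw [derivedRackOp_eq (hinj _) ((hττ (σ d c) (σ (τ c d) z) x).symm.trans (by rw [hσ_dc])),
      ← hτσ (σ d c) (σ (τ c d) z) x, hσ_dc, hσσ d c z]
  rw [hyz, hxy, hxz, hx_yz, hxy_xz]
  exact hττ w (σ e y) x

end DerivedRack

theorem stmt8_general {X : Type*} [Nonempty X] (r : X × X → X × X) (σ τ : X → X → X)
    (hr : ∀ x y : X, r (x, y) = (σ x y, τ y x))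
    (hYB : IsYB r) (hrbij : Function.Bijective r)
    (hτbij : ∀ y : X, Function.Bijective (τ y)) :
    IsRack (fun x y => τ x (σ (Function.invFun (τ y) x) y)) :=
  ⟨bijective_derivedRackOp hr hrbij hτbij,
    derivedRackOp_self_distrib hτbij (fun x y z => (hYB.components hr x y z).1)
      (fun x y z => (hYB.components hr x y z).2.1) (fun x y z => (hYB.components hr x y z).2.2)⟩

theorem stmt8 {X : Type*} [Nonempty X] (r : X × X → X × X) (σ τ : X → X → X)
    (hr : ∀ x y : X, r (x, y) = (σ x y, τ y x))
    (hYB : IsYB r) (hrbij : Function.Bijective r)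
    (hσbij : ∀ x : X, Function.Bijective (σ x))
    (hτbij : ∀ y : X, Function.Bijective (τ y)) :
    IsRack (fun x y => τ x (σ (Function.invFun (τ y) x) y)) :=
  stmt8_general r σ τ hr hYB hrbij hτbij
end

section
/- Let (X, r) be a non-degenerate set-theoretic solution of the Yang–Baxter equation with r(x,y) = (σ_x(y), τ_y(x)), and let T : X × X → X × X be defined by T(x,y) = (τ_y(x), y). Then T is bijective with inverse T⁻¹(x,y) = (τ_y⁻¹(x), y), and T ∘ r ∘ T⁻¹(x,y) = (x ▷ y, x), where x ▷ y := τ_x(σ_{τ_y⁻¹(x)}(y)). -/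
open Function

section FiberwiseMap

variable {α β γ : Type*} [Nonempty α] {f : β → α → γ}

theorem leftInverse_invFun_fiberwise (hf : ∀ b, Injective (f b)) :
    LeftInverse (fun p : γ × β => (invFun (f p.2) p.1, p.2))
      (fun p : α × β => (f p.2 p.1, p.2)) := fun p => by
  simp only [leftInverse_invFun (hf p.2) p.1]

theorem rightInverse_invFun_fiberwise (hf : ∀ b, Surjective (f b)) :
    RightInverse (fun p : γ × β => (invFun (f p.2) p.1, p.2))
      (fun p : α × β => (f p.2 p.1, p.2)) := fun p => by
  simp only [rightInverse_invFun (hf p.2) p.1]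

end FiberwiseMap

theorem stmt9_general {X : Type*} [Nonempty X] (r : X × X → X × X) (σ τ : X → X → X)
    (hr : ∀ x y : X, r (x, y) = (σ x y, τ y x))
    (hτbij : ∀ y : X, Function.Bijective (τ y)) :
    Function.Bijective (fun p : X × X => (τ p.2 p.1, p.2)) ∧
    Function.LeftInverse (fun p : X × X => (Function.invFun (τ p.2) p.1, p.2))
      (fun p : X × X => (τ p.2 p.1, p.2)) ∧
    Function.RightInverse (fun p : X × X => (Function.invFun (τ p.2) p.1, p.2))
      (fun p : X × X => (τ p.2 p.1, p.2)) ∧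
    ∀ x y : X,
      ((fun p : X × X => (τ p.2 p.1, p.2)) ∘ r ∘
        (fun p : X × X => (Function.invFun (τ p.2) p.1, p.2))) (x, y)
        = (τ x (σ (Function.invFun (τ y) x) y), x) := by
  have hleft := leftInverse_invFun_fiberwise fun y => (hτbij y).injective
  have hright := rightInverse_invFun_fiberwise fun y => (hτbij y).surjective
  refine ⟨⟨hleft.injective, hright.surjective⟩, hleft, hright, fun x y => ?_⟩
  simp only [comp_apply, hr, rightInverse_invFun (hτbij y).surjective x]

theorem stmt9 {X : Type*} [Nonempty X] (r : X × X → X × X) (σ τ : X → X → X)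
    (hr : ∀ x y : X, r (x, y) = (σ x y, τ y x))
    (hYB : IsYB r) (hrbij : Function.Bijective r)
    (hσbij : ∀ x : X, Function.Bijective (σ x))
    (hτbij : ∀ y : X, Function.Bijective (τ y)) :
    Function.Bijective (fun p : X × X => (τ p.2 p.1, p.2)) ∧
    Function.LeftInverse (fun p : X × X => (Function.invFun (τ p.2) p.1, p.2))
      (fun p : X × X => (τ p.2 p.1, p.2)) ∧
    Function.RightInverse (fun p : X × X => (Function.invFun (τ p.2) p.1, p.2))
      (fun p : X × X => (τ p.2 p.1, p.2)) ∧
    ∀ x y : X,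
      ((fun p : X × X => (τ p.2 p.1, p.2)) ∘ r ∘
        (fun p : X × X => (Function.invFun (τ p.2) p.1, p.2))) (x, y)
        = (τ x (σ (Function.invFun (τ y) x) y), x) :=
  stmt9_general r σ τ hr hτbij
end

section
/- Let (X, r) be an involutive near-rack solution, i.e. a near-rack solution with r² = id on X × X. Then σ_x = τ for all x ∈ X, and consequently r(x,y) = (τ(y), τ(x)) for all x, y ∈ X. -/
theorem sigma_eq_of_involutive {X : Type*} {r : X × X → X × X} {σ : X → X → X} {τ : X → X}
    (hr : ∀ x y : X, r (x, y) = (σ x y, τ x)) (hτ : τ ∘ τ = id) (hinv : r ∘ r = id) (x : X) :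
    σ x = τ := by
  funext y
  have hτσ : τ (σ x y) = y := by
    have hxy := congrFun hinv (x, y)
    simp only [Function.comp_apply, hr, id_eq, Prod.mk.injEq] at hxy
    exact hxy.2
  calc σ x y = τ (τ (σ x y)) := (congrFun hτ _).symm
    _ = τ y := by rw [hτσ]

theorem stmt12 {X : Type*} (r : X × X → X × X) (σ : X → X → X) (τ : X → X)
    (h : IsNearRackSolution r σ τ) (hinv : r ∘ r = id) :
    (∀ x : X, σ x = τ) ∧ ∀ x y : X, r (x, y) = (τ y, τ x) := by
  have hσ : ∀ x : X, σ x = τ := sigma_eq_of_involutive h.hr h.hτ2 hinv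
  exact ⟨hσ, fun x y => by rw [h.hr, hσ]⟩
end

section
/- Let (X, r) be a near-rack solution with r(x,y) = (σ_x(y), τ(x)), and let R : X × X → k^× be a family of nonzero scalars in a field k satisfying R_{i,j} R_{τ(i),k} R_{σ_i(j), σ_{τ(i)}(k)} = R_{j,k} R_{i,σ_j(k)} R_{τ(i),τ(j)} for all i, j, k ∈ X. If r(x, τ(x)) = (x, τ(x)) for some x ∈ X, then R_{x,τ(x)} = R_{τ(x),x}. -/
theorem IsYB.τ_σ {X : Type*} {r : X × X → X × X} {σ : X → X → X} {τ : X → X}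
    (hYB : IsYB r) (hr : ∀ x y : X, r (x, y) = (σ x y, τ x)) (a b : X) :
    τ (σ a b) = σ (τ a) (τ b) := by
  have := congrFun hYB (a, b, a)
  simp only [Function.comp_apply, rFst, rSnd, hr, Prod.mk.injEq] at this
  exact this.2.1

namespace IsNearRackSolution

variable {X : Type*} {r : X × X → X × X} {σ : X → X → X} {τ : X → X}

theorem τ_τ (h : IsNearRackSolution r σ τ) (x : X) : τ (τ x) = x :=
  congrFun h.hτ2 x

theorem σ_τ_self_of_r_eq (h : IsNearRackSolution r σ τ) {x : X}
    (hx : r (x, τ x) = (x, τ x)) : σ x (τ x) = x := by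
  rw [h.hr] at hx
  exact (Prod.mk.inj hx).1

theorem σ_τ_self_of_σ_self (h : IsNearRackSolution r σ τ) {x : X} (hx : σ x (τ x) = x) :
    σ (τ x) x = τ x := by
  simpa only [hx, h.τ_τ] using (h.hYB.τ_σ h.hr x (τ x)).symm

end IsNearRackSolution

theorem eq_of_mul_mul_eq_mul_mul {M : Type*} [CommMonoidWithZero M] [IsCancelMulZero M]
    {a b : M} (ha : a ≠ 0) (hb : b ≠ 0) (hab : a * b * a = b * a * b) : a = b :=
  mul_right_cancel₀ (mul_ne_zero ha hb) <| calc
    a * (a * b) = a * b * a := mul_comm _ _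
    _ = b * a * b := hab
    _ = b * (a * b) := mul_assoc _ _ _

theorem stmt14 {X : Type*} {k : Type*} [Field k]
    (r : X × X → X × X) (σ : X → X → X) (τ : X → X)
    (h : IsNearRackSolution r σ τ)
    (R : X → X → k) (hR0 : ∀ i j : X, R i j ≠ 0)
    (hR : ∀ i j l : X,
      R i j * R (τ i) l * R (σ i j) (σ (τ i) l)
        = R j l * R i (σ j l) * R (τ i) (τ j))
    (x : X) (hx : r (x, τ x) = (x, τ x)) :
    R x (τ x) = R (τ x) x := by
  have hσx : σ x (τ x) = x := h.σ_τ_self_of_r_eq hx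
  have hστx : σ (τ x) x = τ x := h.σ_τ_self_of_σ_self hσx
  have key := hR x (τ x) x
  rw [hσx, hστx, h.τ_τ] at key
  exact eq_of_mul_mul_eq_mul_mul (hR0 _ _) (hR0 _ _) key
end

section
/- Let (X, r) be a near-rack solution with r(i,j) = (σ_i(j), τ(i)), k a field, W = ⊕_{i∈X} k·w_i, and R : X × X → k^× scalars such that c(w_i ⊗ w_j) = R_{i,j} w_{σ_i(j)} ⊗ w_{τ(i)} defines a braiding (equivalently R satisfies the scalar Yang–Baxter condition for this r). Let φ : W → W be the linear map φ(w_i) = z_i w_{τ(i)} with z_i ∈ k^×. Then (φ⁻¹ ⊗ id) ∘ c ∘ (φ ⊗ id) = (id ⊗ φ⁻¹) ∘ c ∘ (id ⊗ φ) if and only if z_i² = z_j · z_{σ_i(τ(j))} · R_{i,τ(j)} / R_{τ(i),j} for all i, j ∈ X. -/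
open TensorProduct

theorem stmt15 {X : Type*} {k : Type*} [Field k]
    (r : X × X → X × X) (σ : X → X → X) (τ : X → X)
    (h : IsNearRackSolution r σ τ)
    (R : X → X → k) (hR0 : ∀ i j : X, R i j ≠ 0)
    (hR : ∀ i j l : X,
      R i j * R (τ i) l * R (σ i j) (σ (τ i) l)
        = R j l * R i (σ j l) * R (τ i) (τ j))
    -- the braided vector space `W = ⊕_{i ∈ X} k·w_i` with basis `w i = single i 1`
    (c : (X →₀ k) ⊗[k] (X →₀ k) →ₗ[k] (X →₀ k) ⊗[k] (X →₀ k))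
    (hc : ∀ i j : X,
      c (Finsupp.single i (1 : k) ⊗ₜ[k] Finsupp.single j (1 : k))
        = R i j • (Finsupp.single (σ i j) (1 : k) ⊗ₜ[k] Finsupp.single (τ i) (1 : k)))
    (z : X → k) (hz0 : ∀ i : X, z i ≠ 0)
    (φ : (X →₀ k) ≃ₗ[k] (X →₀ k))
    (hφ : ∀ i : X, φ (Finsupp.single i (1 : k)) = z i • Finsupp.single (τ i) (1 : k)) :
    (TensorProduct.map (φ.symm : (X →₀ k) →ₗ[k] (X →₀ k)) LinearMap.id ∘ₗ c ∘ₗ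
        TensorProduct.map (φ : (X →₀ k) →ₗ[k] (X →₀ k)) LinearMap.id
      = TensorProduct.map LinearMap.id (φ.symm : (X →₀ k) →ₗ[k] (X →₀ k)) ∘ₗ c ∘ₗ
        TensorProduct.map LinearMap.id (φ : (X →₀ k) →ₗ[k] (X →₀ k)))
      ↔ ∀ i j : X,
          z i ^ 2 = z j * z (σ i (τ j)) * (R i (τ j) / R (τ i) j) := by
    -- abbreviations
  classical
  have hτ2 : ∀ x, τ (τ x) = x := fun x => congrFun h.hτ2 x
  have hστ : ∀ x y : X, τ (σ x y) = σ (τ x) (τ y) := by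
    intro x y
    have hyb := congrFun h.hYB (x, y, y)
    simp only [Function.comp_apply, rFst, rSnd, h.hr] at hyb
    exact congrArg (fun p => p.2.1) hyb
  set w : X → (X →₀ k) := fun i => Finsupp.single i 1 with hw
  have hφ' : ∀ i : X, φ (w i) = z i • w (τ i) := hφ
  have hc' : ∀ i j : X, c (w i ⊗ₜ[k] w j) = R i j • (w (σ i j) ⊗ₜ[k] w (τ i)) := hc
  have hφs : ∀ y : X, φ.symm (w y) = (z (τ y))⁻¹ • w (τ y) := by
    intro y
    apply φ.injective
    rw [φ.apply_symm_apply, map_smul, hφ, hτ2, smul_smul,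
      inv_mul_cancel₀ (hz0 (τ y)), one_smul]
  have lhs_eval : ∀ i j : X,
      (TensorProduct.map (φ.symm : (X →₀ k) →ₗ[k] (X →₀ k)) LinearMap.id ∘ₗ c ∘ₗ
        TensorProduct.map (φ : (X →₀ k) →ₗ[k] (X →₀ k)) LinearMap.id)
        (w i ⊗ₜ[k] w j)
      = (z i * R (τ i) j * (z (σ i (τ j)))⁻¹) • (w (σ i (τ j)) ⊗ₜ[k] w i) := by
    intro i j
    have key : τ (σ (τ i) j) = σ i (τ j) := by rw [hστ, hτ2]
    simp only [LinearMap.comp_apply, TensorProduct.map_tmul, LinearMap.id_coe, id_eq,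
      LinearEquiv.coe_coe, hφ', hc', hφs, key, hτ2, ← TensorProduct.smul_tmul',
      TensorProduct.tmul_smul, map_smul, smul_smul]
  have rhs_eval : ∀ i j : X,
      (TensorProduct.map LinearMap.id (φ.symm : (X →₀ k) →ₗ[k] (X →₀ k)) ∘ₗ c ∘ₗ
        TensorProduct.map LinearMap.id (φ : (X →₀ k) →ₗ[k] (X →₀ k)))
        (w i ⊗ₜ[k] w j)
      = (z j * R i (τ j) * (z i)⁻¹) • (w (σ i (τ j)) ⊗ₜ[k] w i) := by
    intro i j
    simp only [LinearMap.comp_apply, TensorProduct.map_tmul, LinearMap.id_coe, id_eq,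
      LinearEquiv.coe_coe, hφ', hc', hφs, hτ2, ← TensorProduct.smul_tmul',
      TensorProduct.tmul_smul, map_smul, smul_smul]
  have hcoef : ∀ i j : X,
      (z i * R (τ i) j * (z (σ i (τ j)))⁻¹ = z j * R i (τ j) * (z i)⁻¹)
        ↔ z i ^ 2 = z j * z (σ i (τ j)) * (R i (τ j) / R (τ i) j) := by
    intro i j
    rw [div_eq_mul_inv]
    have h1 := hz0 i
    have h2 := hz0 (σ i (τ j))
    have h3 := hR0 (τ i) j
    constructor <;> intro hh
    · field_simp at hh ⊢
      linear_combination hh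
    · field_simp at hh ⊢
      linear_combination hh
  constructor
  · intro heq i j
    have := congrArg (fun f => f (w i ⊗ₜ[k] w j)) heq
    simp only [lhs_eval, rhs_eval] at this
    set E : (X →₀ k) ⊗[k] (X →₀ k) →ₗ[k] k :=
      LinearMap.mul' k k ∘ₗ
        TensorProduct.map (Finsupp.lapply (σ i (τ j))) (Finsupp.lapply i) with hE
    have hEval : ∀ A : k, E (A • (w (σ i (τ j)) ⊗ₜ[k] w i)) = A := by
      intro A
      rw [map_smul]
      simp [hE, w, smul_eq_mul]
    have h2 := congrArg E this
    rw [hEval, hEval] at h2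
    exact (hcoef i j).mp h2
  · intro hcond
    apply (Finsupp.basisSingleOne.tensorProduct
      (Finsupp.basisSingleOne : Module.Basis X k (X →₀ k))).ext
    rintro ⟨i, j⟩
    simp only [Module.Basis.tensorProduct_apply, Finsupp.coe_basisSingleOne]
    rw [show (Finsupp.single i (1:k)) = w i from rfl, show (Finsupp.single j (1:k)) = w j from rfl,
      lhs_eval, rhs_eval, (hcoef i j).mpr (hcond i j)]
end

section
/- Let (X, r) be an involutive near-rack solution, so r(i,j) = (τ(i), τ(j)) with σ_i = τ for all i, where τ² = id ≠ τ. Let R : X × X → k^× satisfy the scalar Yang–Baxter condition R_{i,j} R_{τ(i),k} R_{τ(j), τ(k)} = R_{j,k} R_{i,τ(k)} R_{τ(i),τ(j)} for all i, j, k ∈ X. Then R_{i,τ(j)} R_{j,τ(i)} = R_{τ(j),i} R_{τ(i),j} for all i, j ∈ X, and in particular R_{τ(i),i} = R_{i,τ(i)}. -/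
/-!
Both identities come from specialising the scalar Yang–Baxter equation and cancelling the
non-zero factors. Taking `(i, j, l) = (j, τ j, j)` gives `a b a = b a b` for `a = R j (τ j)`,
`b = R (τ j) j`, hence `a = b`. The identity for general `i, j` follows by comparing the
instances `(i, i, j)` and `(i, j, τ i)`: their product, after cancelling the common factor
`R i i * R i j * R (τ i) (τ i) * R (τ i) (τ j)`, is exactly the claim.
-/

section ScalarYangBaxter

variable {X k : Type*} [CommRing k] [IsDomain k] {τ : X → X} {R : X → X → k}

/-- The scalar Yang–Baxter equation for `R` over the involutive near-rack solution
`r(i, j) = (τ j, τ i)`. -/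
def IsScalarYBE (τ : X → X) (R : X → X → k) : Prop :=
  ∀ i j l : X, R i j * R (τ i) l * R (τ j) (τ l) = R j l * R i (τ l) * R (τ i) (τ j)

theorem IsScalarYBE.apply_self_apply_eq (hR : IsScalarYBE τ R) (hτ : Function.Involutive τ)
    (hR0 : ∀ i j : X, R i j ≠ 0) (j : X) : R j (τ j) = R (τ j) j := by
  have h := hR j (τ j) j
  rw [hτ] at h
  refine mul_right_cancel₀ (mul_ne_zero (hR0 (τ j) j) (hR0 j (τ j))) ?_
  linear_combination h

theorem IsScalarYBE.mul_apply_apply_eq (hR : IsScalarYBE τ R) (hτ : Function.Involutive τ)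
    (hR0 : ∀ i j : X, R i j ≠ 0) (i j : X) :
    R i (τ j) * R j (τ i) = R (τ j) i * R (τ i) j := by
  have h₁ := hR i i j
  have h₂ := hR i j (τ i)
  rw [hτ] at h₂
  have hc : R i i * R i j * R (τ i) (τ i) * R (τ i) (τ j) ≠ 0 := by
    simp only [ne_eq, mul_eq_zero, hR0, or_self, not_false_eq_true]
  refine mul_right_cancel₀ hc ?_
  linear_combination (-(R j (τ i) * R i i * R (τ i) (τ j))) * h₁
    - (R i i * R (τ i) j * R (τ i) (τ j)) * h₂

end ScalarYangBaxter

theorem stmt16_general {X : Type*} {k : Type*} [Field k]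
    (τ : X → X)
    (hτ2 : τ ∘ τ = id)
    (R : X → X → k) (hR0 : ∀ i j : X, R i j ≠ 0)
    (hR : ∀ i j l : X,
      R i j * R (τ i) l * R (τ j) (τ l)
        = R j l * R i (τ l) * R (τ i) (τ j)) :
    (∀ i j : X, R i (τ j) * R j (τ i) = R (τ j) i * R (τ i) j) ∧
      ∀ i : X, R (τ i) i = R i (τ i) := by
  have hτ : Function.Involutive τ := congrFun hτ2
  have hYBE : IsScalarYBE τ R := hR
  exact ⟨hYBE.mul_apply_apply_eq hτ hR0,
    fun i => (hYBE.apply_self_apply_eq hτ hR0 i).symm⟩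

theorem stmt16 {X : Type*} {k : Type*} [Field k]
    (τ : X → X) (hτbij : Function.Bijective τ)
    (hτ2 : τ ∘ τ = id) (hτne : τ ≠ id)
    (R : X → X → k) (hR0 : ∀ i j : X, R i j ≠ 0)
    (hR : ∀ i j l : X,
      R i j * R (τ i) l * R (τ j) (τ l)
        = R j l * R i (τ l) * R (τ i) (τ j)) :
    (∀ i j : X, R i (τ j) * R j (τ i) = R (τ j) i * R (τ i) j) ∧
      ∀ i : X, R (τ i) i = R i (τ i) :=
  stmt16_general τ hτ2 R hR0 hR
end

section
/- Let (X, r) be an involutive near-rack solution with r(i,j) = (τ(j), τ(i)), τ² = id ≠ τ, and let R : X × X → k^× satisfy the scalar Yang–Baxter condition for r. Fix a base point 1 ∈ X and suppose each quotient R_{i,τ(1)}/R_{τ(i),1} has a square root z_i in k^×. Then the family (z_i)_{i∈X} satisfies z_i²/z_j² = R_{i,τ(j)}/R_{τ(i),j} for all i, j ∈ X, so the map φ(w_i) = z_i w_{τ(i)} on W = ⊕_{i∈X} k·w_i satisfies (φ⁻¹ ⊗ id) ∘ c ∘ (φ ⊗ id) = (id ⊗ φ⁻¹) ∘ c ∘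 (id ⊗ φ), where c(w_i ⊗ w_j) = R_{i,j} w_{τ(j)} ⊗ w_{τ(i)}. -/
open TensorProduct

theorem stmt17 {X : Type*} {k : Type*} [Field k]
    (τ : X → X) (hτbij : Function.Bijective τ)
    (hτ2 : τ ∘ τ = id) (hτne : τ ≠ id)
    (R : X → X → k) (hR0 : ∀ i j : X, R i j ≠ 0)
    (hR : ∀ i j l : X,
      R i j * R (τ i) l * R (τ j) (τ l)
        = R j l * R i (τ l) * R (τ i) (τ j))
    (x0 : X)  -- base point `1 ∈ X`
    (z : X → k) (hz0 : ∀ i : X, z i ≠ 0)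
    (hz : ∀ i : X, z i ^ 2 = R i (τ x0) / R (τ i) x0)
    (c : (X →₀ k) ⊗[k] (X →₀ k) →ₗ[k] (X →₀ k) ⊗[k] (X →₀ k))
    (hc : ∀ i j : X,
      c (Finsupp.single i (1 : k) ⊗ₜ[k] Finsupp.single j (1 : k))
        = R i j • (Finsupp.single (τ j) (1 : k) ⊗ₜ[k] Finsupp.single (τ i) (1 : k)))
    (φ : (X →₀ k) ≃ₗ[k] (X →₀ k))
    (hφ : ∀ i : X, φ (Finsupp.single i (1 : k)) = z i • Finsupp.single (τ i) (1 : k)) :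
    (∀ i j : X, z i ^ 2 / z j ^ 2 = R i (τ j) / R (τ i) j) ∧
    TensorProduct.map (φ.symm : (X →₀ k) →ₗ[k] (X →₀ k)) LinearMap.id ∘ₗ c ∘ₗ
        TensorProduct.map (φ : (X →₀ k) →ₗ[k] (X →₀ k)) LinearMap.id
      = TensorProduct.map LinearMap.id (φ.symm : (X →₀ k) →ₗ[k] (X →₀ k)) ∘ₗ c ∘ₗ
        TensorProduct.map LinearMap.id (φ : (X →₀ k) →ₗ[k] (X →₀ k)) := by
  have hτ : ∀ a, τ (τ a) = a := fun a => congrFun hτ2 a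
  have key : ∀ i j : X, z i ^ 2 / z j ^ 2 = R i (τ j) / R (τ i) j := by
    intro i j
    have h := hR i (τ j) x0
    rw [hτ j] at h
    have a1 := hR0 (τ i) x0
    have a2 := hR0 j (τ x0)
    have a3 := hR0 (τ j) x0
    have a4 := hR0 (τ i) j
    rw [hz i, hz j]
    field_simp
    linear_combination -h
  refine ⟨key, ?_⟩
  have hsymm : ∀ j : X, φ.symm (Finsupp.single (τ j) (1 : k)) = (z j)⁻¹ • Finsupp.single j (1 : k) := by
    intro j
    rw [LinearEquiv.symm_apply_eq, map_smul, hφ, smul_smul, inv_mul_cancel₀ (hz0 j), one_smul]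
  apply (Module.Basis.tensorProduct (Finsupp.basisSingleOne (R := k)) (Finsupp.basisSingleOne (R := k))).ext
  rintro ⟨i, j⟩
  simp only [Module.Basis.tensorProduct_apply, Finsupp.coe_basisSingleOne, LinearMap.comp_apply,
    TensorProduct.map_tmul, LinearMap.id_coe, id_eq, LinearEquiv.coe_coe, hφ]
  rw [← TensorProduct.smul_tmul', TensorProduct.tmul_smul, map_smul, map_smul, map_smul, map_smul,
    hc, hc, hτ i, hτ j, map_smul, map_smul]
  simp only [TensorProduct.map_tmul, LinearMap.id_coe, id_eq, LinearEquiv.coe_coe, hsymm,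
    ← TensorProduct.smul_tmul', TensorProduct.tmul_smul, smul_smul]
  congr 1
  have hk := key i j
  have b1 := hz0 i
  have b2 := hz0 j
  have a4 := hR0 (τ i) j
  field_simp at hk ⊢
  linear_combination hk
end

section
/- Let (X, r) be a near-rack solution and suppose (z_i)_{i∈X} ⊂ k^× satisfies z_i² = z_j z_{σ_i(τ(j))} R_{i,τ(j)}/R_{τ(i),j} for all i, j ∈ X, where X is finite and R : X × X → k^× satisfies the scalar Yang–Baxter condition. Then for any i ∈ X with τ(i) = i one has z_i^{2|X|} = ∏_{j∈X} z_j², and for any i ∈ X one has (z_i z_{τ(i)})^{2|X|} = ∏_{j∈X} z_j⁴. -/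
open Finset

/-- Multiplying `c ^ 2 = z j * z (π j) * (a j / b j)` over all `j` uses each value of `z` twice. -/
theorem pow_two_mul_card_eq_of_forall_sq_eq {X M : Type*} [Fintype X] [DivisionCommMonoid M]
    {c : M} {z a b : X → M} {π : X → X} (hπ : π.Bijective)
    (hc : ∀ j, c ^ 2 = z j * z (π j) * (a j / b j)) :
    c ^ (2 * Fintype.card X) = (∏ j, z j) ^ 2 * ((∏ j, a j) / ∏ j, b j) := by
  calc c ^ (2 * Fintype.card X) = ∏ _j : X, c ^ 2 := by
        rw [prod_const, card_univ, pow_mul]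
    _ = ∏ j, z j * z (π j) * (a j / b j) := prod_congr rfl fun j _ => hc j
    _ = (∏ j, z j) ^ 2 * ((∏ j, a j) / ∏ j, b j) := by
        rw [prod_mul_distrib, prod_mul_distrib, prod_div_distrib, hπ.prod_comp z, sq]

theorem IsNearRackSolution.pow_two_mul_card_eq {X M : Type*} [Fintype X] [DivisionCommMonoid M]
    {r : X × X → X × X} {σ : X → X → X} {τ : X → X} (h : IsNearRackSolution r σ τ)
    {R : X → X → M} {z : X → M}
    (hz : ∀ i j, z i ^ 2 = z j * z (σ i (τ j)) * (R i (τ j) / R (τ i) j)) (i : X) :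
    z i ^ (2 * Fintype.card X) = (∏ j, z j) ^ 2 * ((∏ j, R i j) / ∏ j, R (τ i) j) := by
  rw [pow_two_mul_card_eq_of_forall_sq_eq ((h.hσbij i).comp h.hτbij) (hz i),
    h.hτbij.prod_comp (R i)]

theorem stmt18_general {X : Type*} [Fintype X] {k : Type*} [Field k]
    (r : X × X → X × X) (σ : X → X → X) (τ : X → X)
    (h : IsNearRackSolution r σ τ)
    (R : X → X → k) (hR0 : ∀ i j : X, R i j ≠ 0)
    (z : X → k) (hz : ∀ i j : X, z i ^ 2 = z j * z (σ i (τ j)) * (R i (τ j) / R (τ i) j)) :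
    (∀ i : X, τ i = i → z i ^ (2 * Fintype.card X) = ∏ j : X, z j ^ 2) ∧
      ∀ i : X, (z i * z (τ i)) ^ (2 * Fintype.card X) = ∏ j : X, z j ^ 4 := by
  have hτ : Function.Involutive τ := congrFun h.hτ2
  have hP : ∀ i, ∏ j, R i j ≠ 0 := fun i => prod_ne_zero_iff.2 fun j _ => hR0 i j
  have key := h.pow_two_mul_card_eq hz
  refine ⟨fun i hi => ?_, fun i => ?_⟩
  · rw [key i, hi, div_self (hP i), mul_one, prod_pow]
  · rw [mul_pow, key i, key (τ i), hτ i, prod_pow]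
    field_simp [hP i, hP (τ i)]

theorem stmt18 {X : Type*} [Fintype X] {k : Type*} [Field k]
    (r : X × X → X × X) (σ : X → X → X) (τ : X → X)
    (h : IsNearRackSolution r σ τ)
    (R : X → X → k) (hR0 : ∀ i j : X, R i j ≠ 0)
    (hR : ∀ i j l : X,
      R i j * R (τ i) l * R (σ i j) (σ (τ i) l)
        = R j l * R i (σ j l) * R (τ i) (τ j))
    (z : X → k) (hz0 : ∀ i : X, z i ≠ 0)
    (hz : ∀ i j : X, z i ^ 2 = z j * z (σ i (τ j)) * (R i (τ j) / R (τ i) j)) :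
    (∀ i : X, τ i = i → z i ^ (2 * Fintype.card X) = ∏ j : X, z j ^ 2) ∧
      ∀ i : X, (z i * z (τ i)) ^ (2 * Fintype.card X) = ∏ j : X, z j ^ 4 :=
  stmt18_general r σ τ h R hR0 z hz
end

section
/- Let V be a module over a commutative ring, c : V ⊗ V → V ⊗ V a linear isomorphism satisfying the braid equation (c⊗id)(id⊗c)(c⊗id) = (id⊗c)(c⊗id)(id⊗c), and φ₁, φ₂ : V → V invertible linear maps such that (φ₁⁻¹⊗φ₂⁻¹)c(φ₁⊗φ₂) = (φ₂⁻¹⊗φ₁⁻¹)c(φ₂⊗φ₁). Then c̃ := (φ₁⁻¹⊗φ₂⁻¹)c(φ₁⊗φ₂) also satisfies the braid equation. -/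
open TensorProduct

/-- The endomorphism `c ⊗ id` of `V ⊗ (V ⊗ V)`, acting on the first two factors
(via the associator). -/
noncomputable def cFst {k V : Type*} [CommRing k] [AddCommGroup V] [Module k V]
    (c : V ⊗[k] V →ₗ[k] V ⊗[k] V) :
    V ⊗[k] (V ⊗[k] V) →ₗ[k] V ⊗[k] (V ⊗[k] V) :=
  (TensorProduct.assoc k V V V : (V ⊗[k] V) ⊗[k] V ≃ₗ[k] V ⊗[k] (V ⊗[k] V)).toLinearMap
    ∘ₗ TensorProduct.map c LinearMap.id
    ∘ₗ ((TensorProduct.assoc k V V V).symm :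
        V ⊗[k] (V ⊗[k] V) ≃ₗ[k] (V ⊗[k] V) ⊗[k] V).toLinearMap

/-- The endomorphism `id ⊗ c` of `V ⊗ (V ⊗ V)`, acting on the last two factors. -/
noncomputable def cSnd {k V : Type*} [CommRing k] [AddCommGroup V] [Module k V]
    (c : V ⊗[k] V →ₗ[k] V ⊗[k] V) :
    V ⊗[k] (V ⊗[k] V) →ₗ[k] V ⊗[k] (V ⊗[k] V) :=
  TensorProduct.map LinearMap.id c

/-- The braid equation for a linear endomorphism of `V ⊗ V`. -/
def IsBraiding {k V : Type*} [CommRing k] [AddCommGroup V] [Module k V]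
    (c : V ⊗[k] V →ₗ[k] V ⊗[k] V) : Prop :=
  cFst c ∘ₗ cSnd c ∘ₗ cFst c = cSnd c ∘ₗ cFst c ∘ₗ cSnd c

/-! Conjugating `c` by `φ₁ ⊗ φ₂` conjugates `c ⊗ id` by `φ₁ ⊗ φ₂ ⊗ φ₁`, since the third factor
passes through. By the symmetry hypothesis `c̃` is also the conjugate of `c` by `φ₂ ⊗ φ₁`, so
`id ⊗ c̃` is `id ⊗ c` conjugated by the same `φ₁ ⊗ φ₂ ⊗ φ₁`. Hence both sides of the braid
equation for `c̃` are conjugates, by one automorphism, of the two sides of that for `c`. -/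

section Conj

variable {k V : Type*} [CommRing k] [AddCommGroup V] [Module k V]

theorem cFst_conj (c : Module.End k (V ⊗[k] V)) (e₁ e₂ e₃ : V ≃ₗ[k] V) :
    cFst ((congr e₁ e₂).conj c) = (congr e₁ (congr e₂ e₃)).conj (cFst c) := by
  have hE (v : V ⊗[k] (V ⊗[k] V)) :
      congr e₁ (congr e₂ e₃) v = map (e₁ : V →ₗ[k] V) (map (e₂ : V →ₗ[k] V) e₃) v := rfl
  ext x y z
  simp [cFst, hE, map_map_assoc]
  rfl

theorem cSnd_conj (c : Module.End k (V ⊗[k] V)) (e₁ e₂ e₃ : V ≃ₗ[k] V) :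
    cSnd ((congr e₂ e₃).conj c) = (congr e₁ (congr e₂ e₃)).conj (cSnd c) := by
  ext x y z
  simp [cSnd]

theorem IsBraiding.of_conj {c c' : Module.End k (V ⊗[k] V)} (hc : IsBraiding c)
    (E : V ⊗[k] (V ⊗[k] V) ≃ₗ[k] V ⊗[k] (V ⊗[k] V))
    (hFst : cFst c' = E.conj (cFst c)) (hSnd : cSnd c' = E.conj (cSnd c)) :
    IsBraiding c' := by
  rw [IsBraiding, hFst, hSnd, ← E.conj_comp, ← E.conj_comp, ← E.conj_comp, ← E.conj_comp, hc]

theorem map_symm_comp_comp_map (c : Module.End k (V ⊗[k] V)) (φ ψ : V ≃ₗ[k] V) :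
    map (φ.symm : V →ₗ[k] V) (ψ.symm : V →ₗ[k] V) ∘ₗ c ∘ₗ map (φ : V →ₗ[k] V) (ψ : V →ₗ[k] V)
      = (congr φ.symm ψ.symm).conj c :=
  rfl

end Conj

theorem stmt19_general {k V : Type*} [CommRing k] [AddCommGroup V] [Module k V]
    (c : V ⊗[k] V →ₗ[k] V ⊗[k] V)
    (hc : IsBraiding c)
    (φ₁ φ₂ : V ≃ₗ[k] V)
    (hsym :
      TensorProduct.map (φ₁.symm : V →ₗ[k] V) (φ₂.symm : V →ₗ[k] V) ∘ₗ c ∘ₗ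
          TensorProduct.map (φ₁ : V →ₗ[k] V) (φ₂ : V →ₗ[k] V)
        = TensorProduct.map (φ₂.symm : V →ₗ[k] V) (φ₁.symm : V →ₗ[k] V) ∘ₗ c ∘ₗ
          TensorProduct.map (φ₂ : V →ₗ[k] V) (φ₁ : V →ₗ[k] V)) :
    IsBraiding (TensorProduct.map (φ₁.symm : V →ₗ[k] V) (φ₂.symm : V →ₗ[k] V) ∘ₗ c ∘ₗ
      TensorProduct.map (φ₁ : V →ₗ[k] V) (φ₂ : V →ₗ[k] V)) := by
  refine hc.of_conj (congr φ₁.symm (congr φ₂.symm φ₁.symm)) ?_ ?_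
  · rw [map_symm_comp_comp_map, cFst_conj]
  · rw [hsym, map_symm_comp_comp_map, cSnd_conj]

theorem stmt19 {k V : Type*} [CommRing k] [AddCommGroup V] [Module k V]
    (c : V ⊗[k] V →ₗ[k] V ⊗[k] V) (hcbij : Function.Bijective c)
    (hc : IsBraiding c)
    (φ₁ φ₂ : V ≃ₗ[k] V)
    (hsym :
      TensorProduct.map (φ₁.symm : V →ₗ[k] V) (φ₂.symm : V →ₗ[k] V) ∘ₗ c ∘ₗ
          TensorProduct.map (φ₁ : V →ₗ[k] V) (φ₂ : V →ₗ[k] V)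
        = TensorProduct.map (φ₂.symm : V →ₗ[k] V) (φ₁.symm : V →ₗ[k] V) ∘ₗ c ∘ₗ
          TensorProduct.map (φ₂ : V →ₗ[k] V) (φ₁ : V →ₗ[k] V)) :
    IsBraiding (TensorProduct.map (φ₁.symm : V →ₗ[k] V) (φ₂.symm : V →ₗ[k] V) ∘ₗ c ∘ₗ
      TensorProduct.map (φ₁ : V →ₗ[k] V) (φ₂ : V →ₗ[k] V)) :=
  stmt19_general c hc φ₁ φ₂ hsym
end
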